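/- For every n ≥ 1, A_n · B_n + s·B_n = t · J_{v_n, t·4^n}, where v_n := (v+(2^{n+1}−4)t)·2^{n−1}. -/

import Mathlib

open Matrix Kronecker

def Jmat (m l : ℕ) : Matrix (Fin m) (Fin l) ℤ := Matrix.of fun _ _ => 1
def Kmat (m : ℕ) : Matrix (Fin m) (Fin m) ℤ :=
  Matrix.of fun i j => if (j : ℕ) = m - 1 - (i : ℕ) then 1 else 0
def kron {m n p q : ℕ} (A : Matrix (Fin m) (Fin n) ℤ) (B : Matrix (Fin p) (Fin q) ℤ) :
    Matrix (Fin (m * p)) (Fin (n * q)) ℤ :=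
  Matrix.reindex finProdFinEquiv finProdFinEquiv (A ⊗ₖ B)
def castM {m n m' n' : ℕ} (hm : m = m') (hn : n = n') (A : Matrix (Fin m) (Fin n) ℤ) :
    Matrix (Fin m') (Fin n') ℤ :=
  Matrix.reindex (finCongr hm) (finCongr hn) A
def alphaM {m l : ℕ} (s : ℕ) (X : Matrix (Fin m) (Fin l) ℤ) :
    Matrix (Fin (m / s)) (Fin l) ℤ :=
  Matrix.of fun i j => X (Fin.castLE (Nat.div_le_self m s) i) j
def vstack {m₁ m₂ l : ℕ} (X : Matrix (Fin m₁) (Fin l) ℤ) (Y : Matrix (Fin m₂) (Fin l) ℤ) :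
    Matrix (Fin (m₁ + m₂)) (Fin l) ℤ :=
  Matrix.reindex finSumFinEquiv (Equiv.refl _) (Matrix.fromRows X Y)
def hstack {m l₁ l₂ : ℕ} (X : Matrix (Fin m) (Fin l₁) ℤ) (Y : Matrix (Fin m) (Fin l₂) ℤ) :
    Matrix (Fin m) (Fin (l₁ + l₂)) ℤ :=
  Matrix.reindex (Equiv.refl _) finSumFinEquiv (Matrix.fromCols X Y)
def block2 {a b c d : ℕ} (A : Matrix (Fin a) (Fin c) ℤ) (B : Matrix (Fin a) (Fin d) ℤ)
    (C : Matrix (Fin b) (Fin c) ℤ) (D : Matrix (Fin b) (Fin d) ℤ) :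
    Matrix (Fin (a + b)) (Fin (c + d)) ℤ :=
  Matrix.reindex finSumFinEquiv finSumFinEquiv (Matrix.fromBlocks A B C D)
lemma four_pow_eq (n : ℕ) : (4 : ℕ) ^ n = 2 ^ n * 2 ^ n := by
  rw [show (4 : ℕ) = 2 * 2 from rfl, mul_pow]
lemma t_four_pow_div (t n : ℕ) : t * 4 ^ n / 2 ^ n = t * 2 ^ n := by
  rw [four_pow_eq, ← mul_assoc, Nat.mul_div_cancel _ (by positivity)]
def vnum (v t n : ℕ) : ℕ := (v + (2 ^ (n + 1) - 4) * t) * 2 ^ (n - 1)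
lemma vnum_one (v t : ℕ) : vnum v t 1 = v := by norm_num [vnum]
lemma vnum_succ (v t n : ℕ) :
    vnum v t (n + 2) = 2 * vnum v t (n + 1) + 2 * (t * 4 ^ (n + 1)) := by
  unfold vnum
  simp only [show n + 2 + 1 = n + 3 from rfl, show n + 2 - 1 = n + 1 from rfl,
    show n + 1 + 1 = n + 2 from rfl, show n + 1 - 1 = n from rfl]
  have h2 : (4 : ℕ) ≤ 2 ^ (n + 2) := by
    calc (4 : ℕ) = 2 ^ 2 := rfl
    _ ≤ 2 ^ (n + 2) := Nat.pow_le_pow_right (by norm_num) (by omega)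
  have h3 : (4 : ℕ) ≤ 2 ^ (n + 3) := le_trans h2 (Nat.pow_le_pow_right (by norm_num) (by omega))
  rw [four_pow_eq]
  zify [h2, h3]
  ring
def Pmat (t n : ℕ) : Matrix (Fin (t * 4 ^ n)) (Fin (t * 4 ^ n)) ℤ :=
  castM (by rw [four_pow_eq]; ring) (by rw [four_pow_eq]; ring)
    (kron (kron (Jmat (2 ^ n) 1) (Kmat (2 ^ n))) (Jmat t (t * 2 ^ n)))
def Pone (t : ℕ) : Matrix (Fin (4 * t)) (Fin (4 * t)) ℤ :=
  castM (by ring) (by ring) (kron (kron (Jmat 2 1) (Kmat 2)) (Jmat t (2 * t)))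

/-- The recursively defined sequence `P'_n` of Lemma 2. -/
def P'mat (t : ℕ) : (n : ℕ) → Matrix (Fin (t * 4 ^ n)) (Fin (t * 4 ^ n)) ℤ
  | 0 => 0
  | 1 => castM (by ring) (by ring) (kron (kron (Jmat 2 1) (Kmat 2)) (Jmat t (2 * t)))
  | (n + 2) =>
      castM
        (by rw [t_four_pow_div, four_pow_eq]; ring)
        (by ring)
        (kron (kron (kron (Jmat (2 ^ (n + 2)) 1) (Kmat 2))
          (alphaM (2 ^ (n + 1)) (P'mat t (n + 1)))) (Jmat 1 2))

/-- The recursively defined sequence `B_n` (with `B_1` given). -/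
def Bmat (t v : ℕ) (B₁ : Matrix (Fin v) (Fin (4 * t)) ℤ) :
    (n : ℕ) → Matrix (Fin (vnum v t n)) (Fin (t * 4 ^ n)) ℤ
  | 0 => 0
  | 1 => castM (vnum_one v t).symm (by ring) B₁
  | (n + 2) =>
      castM (by rw [vnum_succ]; try ring) (by ring)
        (vstack (kron (kron (Kmat 2) (Bmat t v B₁ (n + 1))) (Jmat 1 2))
          (kron (kron (1 : Matrix (Fin 2) (Fin 2) ℤ) (Pmat t (n + 1))) (Jmat 1 2)))

/-- The recursively defined sequence `C_n` (with `C_1` given). -/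
def Cmat (t v : ℕ) (C₁ : Matrix (Fin (4 * t)) (Fin v) ℤ) :
    (n : ℕ) → Matrix (Fin (t * 4 ^ n)) (Fin (vnum v t n)) ℤ
  | 0 => 0
  | 1 => castM (by ring) (vnum_one v t).symm C₁
  | (n + 2) =>
      castM (by rw [t_four_pow_div, four_pow_eq]; ring) (by rw [vnum_succ]; try ring)
        (hstack
          (kron (kron (Jmat (2 ^ (n + 2)) 1) (1 : Matrix (Fin 2) (Fin 2) ℤ))
            (alphaM (2 ^ (n + 1)) (Cmat t v C₁ (n + 1))))
          (kron (kron (Jmat (2 ^ (n + 2)) 1) (1 : Matrix (Fin 2) (Fin 2) ℤ))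
            (alphaM (2 ^ (n + 1)) (Pmat t (n + 1)))))

/-- The recursively defined sequence `A_n` (with `A_1`, `B_1`, `C_1` given). -/
def Amat (t v : ℕ) (A₁ : Matrix (Fin v) (Fin v) ℤ) (B₁ : Matrix (Fin v) (Fin (4 * t)) ℤ)
    (C₁ : Matrix (Fin (4 * t)) (Fin v) ℤ) :
    (n : ℕ) → Matrix (Fin (vnum v t n)) (Fin (vnum v t n)) ℤ
  | 0 => 0
  | 1 => castM (vnum_one v t).symm (vnum_one v t).symm A₁
  | (n + 2) =>
      castM (by rw [vnum_succ]) (by rw [vnum_succ])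
        (block2 (kron (1 : Matrix (Fin 2) (Fin 2) ℤ) (Amat t v A₁ B₁ C₁ (n + 1)))
          (kron (1 : Matrix (Fin 2) (Fin 2) ℤ) (Bmat t v B₁ (n + 1)))
          (kron (Kmat 2) (Cmat t v C₁ (n + 1)))
          (kron (Kmat 2) (Pmat t (n + 1))))

/-!
Three identities are proved by induction on `n`, each step using only the previous level:
`B_n (J_{2^n,1} ⊗ I_{2^n t}) = J`, `C_n B_n + s P_n = t J` and the theorem itself. The first says
that in every row of `B_n` the entries of each residue class of columns modulo `2^n t` sum to 1;
together with the factorisation `P_n = (J_{2^n,1} ⊗ I_{2^n t}) (K_{2^n} ⊗ J_{t,2^n t})` it gives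
`B_n P_n = t J` and `P_n² = t J`. In each inductive step the block forms of `A_{n+1}`, `B_{n+1}`,
`C_{n+1}` and the mixed-product rule for `⊗` reduce the blocks of the left-hand side to
`K₂ ⊗ (t J)` and `I₂ ⊗ (t J)` (tensored with `J_{1,2}`), which add up to `t J` since `K₂ + I₂ = J₂`.

Sizes such as `vnum v t (n + 2)` and `2 * vnum v t (n + 1) + 2 * (t * 4 ^ (n + 1))` agree only
propositionally, so matrices are compared with `A ≃ₘ B`: equality after `castM` along equalities
of the dimensions.
-/

def MEq {m n m' n' : ℕ} (A : Matrix (Fin m) (Fin n) ℤ) (B : Matrix (Fin m') (Fin n') ℤ) :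
    Prop :=
  ∃ (hm : m = m') (hn : n = n'), castM hm hn A = B

infix:50 " ≃ₘ " => MEq

namespace MEq

variable {m n p m' n' p' m'' n'' : ℕ}

@[refl] theorem refl (A : Matrix (Fin m) (Fin n) ℤ) : A ≃ₘ A := ⟨rfl, rfl, rfl⟩

theorem of_eq {A B : Matrix (Fin m) (Fin n) ℤ} (h : A = B) : A ≃ₘ B := ⟨rfl, rfl, h⟩

theorem eq {A B : Matrix (Fin m) (Fin n) ℤ} (h : A ≃ₘ B) : A = B := by
  obtain ⟨_, _, rfl⟩ := h; rfl

theorem symm {A : Matrix (Fin m) (Fin n) ℤ} {B : Matrix (Fin m') (Fin n') ℤ}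
    (h : A ≃ₘ B) : B ≃ₘ A := by
  obtain ⟨rfl, rfl, rfl⟩ := h; rfl

theorem trans {A : Matrix (Fin m) (Fin n) ℤ} {B : Matrix (Fin m') (Fin n') ℤ}
    {C : Matrix (Fin m'') (Fin n'') ℤ} (h : A ≃ₘ B) (h' : B ≃ₘ C) : A ≃ₘ C := by
  obtain ⟨rfl, rfl, rfl⟩ := h; exact h'

instance : @Trans (Matrix (Fin m) (Fin n) ℤ) (Matrix (Fin m') (Fin n') ℤ)
    (Matrix (Fin m'') (Fin n'') ℤ) MEq MEq MEq := ⟨trans⟩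

theorem mul {A : Matrix (Fin m) (Fin n) ℤ} {B : Matrix (Fin n) (Fin p) ℤ}
    {A' : Matrix (Fin m') (Fin n') ℤ} {B' : Matrix (Fin n') (Fin p') ℤ}
    (hA : A ≃ₘ A') (hB : B ≃ₘ B') : A * B ≃ₘ A' * B' := by
  obtain ⟨rfl, rfl, rfl⟩ := hA; obtain ⟨-, rfl, rfl⟩ := hB; rfl

theorem add {A B : Matrix (Fin m) (Fin n) ℤ} {A' B' : Matrix (Fin m') (Fin n') ℤ}
    (hA : A ≃ₘ A') (hB : B ≃ₘ B') : A + B ≃ₘ A' + B' := by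
  obtain ⟨rfl, rfl, rfl⟩ := hA; obtain ⟨-, -, rfl⟩ := hB; rfl

theorem smul {A : Matrix (Fin m) (Fin n) ℤ} {A' : Matrix (Fin m') (Fin n') ℤ} (c : ℤ)
    (hA : A ≃ₘ A') : c • A ≃ₘ c • A' := by
  obtain ⟨rfl, rfl, rfl⟩ := hA; rfl

theorem kron {q q' : ℕ} {A : Matrix (Fin m) (Fin n) ℤ} {B : Matrix (Fin p) (Fin q) ℤ}
    {A' : Matrix (Fin m') (Fin n') ℤ} {B' : Matrix (Fin p') (Fin q') ℤ}
    (hA : A ≃ₘ A') (hB : B ≃ₘ B') : kron A B ≃ₘ kron A' B' := by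
  obtain ⟨rfl, rfl, rfl⟩ := hA; obtain ⟨rfl, rfl, rfl⟩ := hB; rfl

theorem vstack {X : Matrix (Fin m) (Fin n) ℤ} {Y : Matrix (Fin p) (Fin n) ℤ}
    {X' : Matrix (Fin m') (Fin n') ℤ} {Y' : Matrix (Fin p') (Fin n') ℤ}
    (hX : X ≃ₘ X') (hY : Y ≃ₘ Y') : vstack X Y ≃ₘ vstack X' Y' := by
  obtain ⟨rfl, rfl, rfl⟩ := hX; obtain ⟨rfl, -, rfl⟩ := hY; rfl

theorem alphaM (N : ℕ) {X : Matrix (Fin m) (Fin n) ℤ} {X' : Matrix (Fin m') (Fin n') ℤ}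
    (hX : X ≃ₘ X') : alphaM N X ≃ₘ alphaM N X' := by
  obtain ⟨rfl, rfl, rfl⟩ := hX; rfl

end MEq

section Dimensions

variable {m n m' n' : ℕ}

theorem castM_mEq (hm : m = m') (hn : n = n') (A : Matrix (Fin m) (Fin n) ℤ) :
    castM hm hn A ≃ₘ A := by
  subst hm hn; rfl

theorem mEq_castM (hm : m = m') (hn : n = n') (A : Matrix (Fin m) (Fin n) ℤ) :
    A ≃ₘ castM hm hn A :=
  (castM_mEq hm hn A).symm

theorem Jmat_mEq_Jmat (hm : m = m') (hn : n = n') : Jmat m n ≃ₘ Jmat m' n' := by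
  subst hm hn; rfl

theorem Kmat_mEq_Kmat (hm : m = m') : Kmat m ≃ₘ Kmat m' := by
  subst hm; rfl

theorem one_mEq_one (hm : m = m') :
    (1 : Matrix (Fin m) (Fin m) ℤ) ≃ₘ (1 : Matrix (Fin m') (Fin m') ℤ) := by
  subst hm; rfl

end Dimensions

section Kronecker

variable {m n p q r u : ℕ}

theorem kron_apply (A : Matrix (Fin m) (Fin n) ℤ) (B : Matrix (Fin p) (Fin q) ℤ)
    (i : Fin (m * p)) (j : Fin (n * q)) :
    kron A B i j = A i.divNat j.divNat * B i.modNat j.modNat := rfl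

theorem kron_mul (A : Matrix (Fin m) (Fin n) ℤ) (B : Matrix (Fin p) (Fin q) ℤ)
    (C : Matrix (Fin n) (Fin r) ℤ) (D : Matrix (Fin q) (Fin u) ℤ) :
    kron A B * kron C D = kron (A * C) (B * D) := by
  simp only [kron, reindex_apply, submatrix_mul_equiv, mul_kronecker_mul]

theorem kron_add_left (A B : Matrix (Fin m) (Fin n) ℤ) (C : Matrix (Fin p) (Fin q) ℤ) :
    kron (A + B) C = kron A C + kron B C := by
  ext i j; simp [kron_apply, add_mul]

theorem kron_add_right (A : Matrix (Fin m) (Fin n) ℤ) (B C : Matrix (Fin p) (Fin q) ℤ) :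
    kron A (B + C) = kron A B + kron A C := by
  ext i j; simp [kron_apply, mul_add]

theorem kron_smul_left (c : ℤ) (A : Matrix (Fin m) (Fin n) ℤ) (B : Matrix (Fin p) (Fin q) ℤ) :
    kron (c • A) B = c • kron A B := by
  ext i j; simp [kron_apply, mul_assoc]

theorem kron_smul_right (c : ℤ) (A : Matrix (Fin m) (Fin n) ℤ) (B : Matrix (Fin p) (Fin q) ℤ) :
    kron A (c • B) = c • kron A B := by
  ext i j; simp [kron_apply, mul_left_comm]

theorem Jmat_kron_Jmat : kron (Jmat m n) (Jmat p q) = Jmat (m * p) (n * q) := by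
  ext i j; simp [kron_apply, Jmat]

theorem one_kron_one :
    kron (1 : Matrix (Fin m) (Fin m) ℤ) (1 : Matrix (Fin p) (Fin p) ℤ) = 1 := by
  simp only [kron, one_kronecker_one, reindex_apply, submatrix_one_equiv]

theorem kron_assoc (A : Matrix (Fin m) (Fin n) ℤ) (B : Matrix (Fin p) (Fin q) ℤ)
    (C : Matrix (Fin r) (Fin u) ℤ) : kron (kron A B) C ≃ₘ kron A (kron B C) := by
  refine ⟨mul_assoc m p r, mul_assoc n q u, ?_⟩
  ext i j
  simp only [castM, reindex_apply, submatrix_apply, kron_apply, mul_assoc]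
  congr 1
  · congr 1 <;> ext <;> simp [Nat.div_div_eq_div_mul, mul_comm]
  · congr 1 <;> congr 1 <;> ext <;> simp [Nat.mod_mul_left_div_self]

theorem kron_kron_kron_mEq {x y : ℕ} (A : Matrix (Fin m) (Fin n) ℤ)
    (B : Matrix (Fin p) (Fin q) ℤ) (C : Matrix (Fin r) (Fin u) ℤ)
    (D : Matrix (Fin x) (Fin y) ℤ) :
    kron (kron A B) (kron C D) ≃ₘ kron (kron A (kron B C)) D :=
  calc kron (kron A B) (kron C D) ≃ₘ kron A (kron B (kron C D)) := kron_assoc A B _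
    _ ≃ₘ kron A (kron (kron B C) D) := (MEq.refl A).kron (kron_assoc B C D).symm
    _ ≃ₘ kron (kron A (kron B C)) D := (kron_assoc A _ D).symm

theorem kron_Jmat_one_one (X : Matrix (Fin m) (Fin n) ℤ) : kron X (Jmat 1 1) ≃ₘ X := by
  refine ⟨mul_one m, mul_one n, ?_⟩
  ext i j
  simp only [castM, Jmat, reindex_apply, finCongr_symm, submatrix_apply, finCongr_apply,
    kron_apply, of_apply, mul_one]
  congr <;> ext <;> simp

theorem Jmat_one_one_kron (X : Matrix (Fin m) (Fin n) ℤ) : kron (Jmat 1 1) X ≃ₘ X := by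
  refine ⟨one_mul m, one_mul n, ?_⟩
  ext i j
  simp only [castM, Jmat, reindex_apply, finCongr_symm, submatrix_apply, finCongr_apply,
    kron_apply, of_apply, one_mul]
  congr <;> ext <;> simp [Nat.mod_eq_of_lt]

end Kronecker

section Exchange

variable {m n : ℕ}

theorem Jmat_mul_Jmat (a b c : ℕ) : Jmat a b * Jmat b c = (b : ℤ) • Jmat a c := by
  ext i j
  simp [mul_apply, Jmat]

theorem Kmat_apply (i j : Fin m) : Kmat m i j = if j = i.rev then 1 else 0 := by
  simp only [Kmat, of_apply, Fin.ext_iff, Fin.val_rev]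
  congr 2
  omega

theorem Jmat_mul_Kmat (a : ℕ) : Jmat a m * Kmat m = Jmat a m := by
  ext i j
  simp [mul_apply, Kmat_apply, Jmat, ← Fin.rev_eq_iff]

theorem Kmat_mul_Jmat (b : ℕ) : Kmat m * Jmat m b = Jmat m b := by
  ext i j
  simp [mul_apply, Kmat_apply, Jmat]

theorem Kmat_mul_Kmat : Kmat m * Kmat m = 1 := by
  ext i j
  simp only [mul_apply, Kmat_apply, ite_mul, one_mul, zero_mul, Finset.sum_ite_eq',
    Finset.mem_univ, if_true, Fin.rev_rev, one_apply, eq_comm]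

theorem Kmat_two_add_one : Kmat 2 + 1 = Jmat 2 2 := by
  ext i j
  fin_cases i <;> fin_cases j <;> simp [Kmat, Jmat]

theorem finProdFinEquiv_rev (a : Fin m) (b : Fin n) :
    finProdFinEquiv (a.rev, b.rev) = (finProdFinEquiv (a, b)).rev := by
  ext
  simp only [finProdFinEquiv_apply_val, Fin.val_rev]
  have ha : (a : ℕ) + 1 ≤ m := a.isLt
  have hb : (b : ℕ) + 1 ≤ n := b.isLt
  have hab : (b : ℕ) + n * a + 1 ≤ m * n := by nlinarith
  zify [ha, hb, hab]
  ring

theorem Kmat_mul_mEq_kron_Kmat : Kmat (m * n) ≃ₘ kron (Kmat m) (Kmat n) := by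
  refine ⟨rfl, rfl, ?_⟩
  ext i j
  obtain ⟨⟨a, b⟩, rfl⟩ := finProdFinEquiv.surjective i
  obtain ⟨⟨c, d⟩, rfl⟩ := finProdFinEquiv.surjective j
  simp only [castM, kron, reindex_apply, submatrix_apply, finCongr_refl, Equiv.refl_symm,
    Equiv.refl_apply, Equiv.symm_apply_apply, kroneckerMap_apply, Kmat_apply,
    ← finProdFinEquiv_rev, EmbeddingLike.apply_eq_iff_eq, Prod.mk.injEq]
  split_ifs <;> simp_all

end Exchange

section Blocks

variable {a b c d l : ℕ}

theorem vstack_mul (X : Matrix (Fin a) (Fin l) ℤ) (Y : Matrix (Fin b) (Fin l) ℤ)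
    (Z : Matrix (Fin l) (Fin d) ℤ) : vstack X Y * Z = vstack (X * Z) (Y * Z) := by
  ext i j
  rcases h : finSumFinEquiv.symm i with _ | _ <;> simp [vstack, h, mul_apply]

theorem block2_mul_vstack (A : Matrix (Fin a) (Fin c) ℤ) (B : Matrix (Fin a) (Fin d) ℤ)
    (C : Matrix (Fin b) (Fin c) ℤ) (D : Matrix (Fin b) (Fin d) ℤ)
    (X : Matrix (Fin c) (Fin l) ℤ) (Y : Matrix (Fin d) (Fin l) ℤ) :
    block2 A B C D * vstack X Y = vstack (A * X + B * Y) (C * X + D * Y) := by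
  simp only [block2, vstack, reindex_apply, submatrix_mul_equiv, fromBlocks_mul_fromRows]

theorem hstack_mul_vstack (A : Matrix (Fin a) (Fin c) ℤ) (B : Matrix (Fin a) (Fin d) ℤ)
    (X : Matrix (Fin c) (Fin l) ℤ) (Y : Matrix (Fin d) (Fin l) ℤ) :
    hstack A B * vstack X Y = A * X + B * Y := by
  simp only [hstack, vstack, reindex_apply, submatrix_mul_equiv, fromCols_mul_fromRows]
  rfl

theorem vstack_add (X X' : Matrix (Fin a) (Fin l) ℤ) (Y Y' : Matrix (Fin b) (Fin l) ℤ) :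
    vstack X Y + vstack X' Y' = vstack (X + X') (Y + Y') := by
  ext i j
  rcases h : finSumFinEquiv.symm i with _ | _ <;> simp [vstack, h]

theorem smul_vstack (k : ℤ) (X : Matrix (Fin a) (Fin l) ℤ) (Y : Matrix (Fin b) (Fin l) ℤ) :
    k • vstack X Y = vstack (k • X) (k • Y) := by
  ext i j
  rcases h : finSumFinEquiv.symm i with _ | _ <;> simp [vstack, h]

theorem vstack_Jmat : vstack (Jmat a l) (Jmat b l) = Jmat (a + b) l := by
  ext i j
  rcases h : finSumFinEquiv.symm i with _ | _ <;> simp [vstack, h, Jmat]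

end Blocks

section RowTruncation

variable {m n l N : ℕ}

theorem alphaM_mul (X : Matrix (Fin m) (Fin n) ℤ) (Y : Matrix (Fin n) (Fin l) ℤ) :
    alphaM N X * Y = alphaM N (X * Y) := by
  ext i j
  simp [alphaM, mul_apply]

theorem alphaM_add (X Y : Matrix (Fin m) (Fin n) ℤ) :
    alphaM N (X + Y) = alphaM N X + alphaM N Y := rfl

theorem alphaM_smul (c : ℤ) (X : Matrix (Fin m) (Fin n) ℤ) :
    alphaM N (c • X) = c • alphaM N X := rfl

theorem alphaM_Jmat : alphaM N (Jmat m n) = Jmat (m / N) n := rfl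

theorem alphaM_Jmat_kron (hN : 0 < N) (X : Matrix (Fin m) (Fin n) ℤ) :
    alphaM N (kron (Jmat N 1) X) ≃ₘ X := by
  refine ⟨Nat.mul_div_cancel_left m hN, one_mul n, ?_⟩
  ext i j
  simp only [castM, reindex_apply, submatrix_apply, alphaM, of_apply, kron_apply, Jmat, one_mul]
  congr <;> ext <;> simp [Nat.mod_eq_of_lt]

end RowTruncation

section BlockProducts

variable {p n r a b c q z : ℕ}

theorem mul_castM_kron_Jmat (X : Matrix (Fin a) (Fin b) ℤ) (Y : Matrix (Fin b) (Fin c) ℤ) :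
    X * castM (mul_one b) rfl (kron Y (Jmat 1 q)) ≃ₘ kron (X * Y) (Jmat 1 q) :=
  calc X * castM (mul_one b) rfl (kron Y (Jmat 1 q)) ≃ₘ kron X (Jmat 1 1) * kron Y (Jmat 1 q) :=
        (kron_Jmat_one_one X).symm.mul (castM_mEq _ _ _)
    _ = kron (X * Y) (Jmat 1 q) := by
        rw [kron_mul, Jmat_mul_Jmat, Nat.cast_one, one_smul]

theorem kron_mul_mEq_kron_kron_Jmat (M : Matrix (Fin p) (Fin n) ℤ) (X : Matrix (Fin a) (Fin b) ℤ)
    (M' : Matrix (Fin n) (Fin r) ℤ) (Y : Matrix (Fin b) (Fin c) ℤ)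
    {R : Matrix (Fin (n * b)) (Fin z) ℤ} (hR : R ≃ₘ kron (kron M' Y) (Jmat 1 q)) :
    kron M X * R ≃ₘ kron (kron (M * M') (X * Y)) (Jmat 1 q) :=
  calc kron M X * R ≃ₘ kron M X * kron M' (castM (mul_one b) rfl (kron Y (Jmat 1 q))) :=
        (MEq.refl _).mul <| hR.trans <| (kron_assoc _ _ _).trans <|
          (MEq.refl _).kron (mEq_castM _ _ _)
    _ = kron (M * M') (X * castM (mul_one b) rfl (kron Y (Jmat 1 q))) := kron_mul _ _ _ _
    _ ≃ₘ kron (M * M') (kron (X * Y) (Jmat 1 q)) := (MEq.refl _).kron (mul_castM_kron_Jmat X Y)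
    _ ≃ₘ kron (kron (M * M') (X * Y)) (Jmat 1 q) := (kron_assoc _ _ _).symm

theorem kron_kron_alphaM_mul_mEq {N l : ℕ} (M : Matrix (Fin p) (Fin n) ℤ)
    (X : Matrix (Fin a) (Fin b) ℤ) (M' : Matrix (Fin n) (Fin r) ℤ) (Y : Matrix (Fin b) (Fin c) ℤ)
    {R : Matrix (Fin (1 * n * b)) (Fin z) ℤ} (hR : R ≃ₘ kron (kron M' Y) (Jmat 1 q)) :
    kron (kron (Jmat l 1) M) (alphaM N X) * R ≃ₘ
      kron (kron (kron (Jmat l 1) (M * M')) (alphaM N (X * Y))) (Jmat 1 q) :=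
  calc kron (kron (Jmat l 1) M) (alphaM N X) * R
      ≃ₘ kron (Jmat l 1) (kron M (alphaM N X)) *
          kron (Jmat 1 1) (castM (by rw [one_mul]) rfl R) :=
        (kron_assoc _ _ _).mul ((mEq_castM _ _ R).trans (Jmat_one_one_kron _).symm)
    _ = kron (Jmat l 1 * Jmat 1 1) (kron M (alphaM N X) * castM (by rw [one_mul]) rfl R) :=
        kron_mul _ _ _ _
    _ ≃ₘ kron (Jmat l 1) (kron (kron (M * M') (alphaM N X * Y)) (Jmat 1 q)) := by
        rw [Jmat_mul_Jmat, Nat.cast_one, one_smul]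
        exact (MEq.refl _).kron
          (kron_mul_mEq_kron_kron_Jmat _ _ _ _ ((castM_mEq _ _ _).trans hR))
    _ ≃ₘ kron (kron (kron (Jmat l 1) (M * M')) (alphaM N (X * Y))) (Jmat 1 q) := by
        rw [alphaM_mul]
        exact (kron_assoc _ _ _).symm.trans ((kron_assoc _ _ _).symm.kron (MEq.refl _))

theorem kron_kron_Kmat_add_kron_kron_one (k : ℤ) :
    kron (kron (Kmat 2) (k • Jmat a b)) (Jmat 1 2) + kron (kron 1 (k • Jmat a b)) (Jmat 1 2) =
      k • Jmat (2 * a * 1) (2 * b * 2) := by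
  rw [← kron_add_left, ← kron_add_left, Kmat_two_add_one, kron_smul_right, kron_smul_left,
    Jmat_kron_Jmat, Jmat_kron_Jmat]

end BlockProducts

section BlockRows

variable {a b : ℕ} (A : Matrix (Fin a) (Fin a) ℤ) (B : Matrix (Fin a) (Fin b) ℤ)
  (C : Matrix (Fin b) (Fin a) ℤ) (P : Matrix (Fin b) (Fin b) ℤ) (s c : ℤ)

theorem kron_one_mul_add_smul_eq_smul_Jmat
    (hAB : A * B + s • B = c • Jmat a b) (hBP : B * P = c • Jmat a b) :
    kron (1 : Matrix (Fin 2) (Fin 2) ℤ) A *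
        castM (mul_one (2 * a)) rfl (kron (kron (Kmat 2) B) (Jmat 1 2)) +
      kron (1 : Matrix (Fin 2) (Fin 2) ℤ) B *
        castM (mul_one (2 * b)) rfl (kron (kron 1 P) (Jmat 1 2)) +
      s • castM (mul_one (2 * a)) rfl (kron (kron (Kmat 2) B) (Jmat 1 2)) =
      c • Jmat (2 * a) (2 * b * 2) := by
  refine MEq.eq ?_
  calc _ ≃ₘ kron (kron (1 * Kmat 2) (A * B)) (Jmat 1 2) +
          kron (kron (1 * 1) (B * P)) (Jmat 1 2) + s • kron (kron (Kmat 2) B) (Jmat 1 2) :=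
        ((kron_mul_mEq_kron_kron_Jmat _ _ _ _ (castM_mEq _ _ _)).add
          (kron_mul_mEq_kron_kron_Jmat _ _ _ _ (castM_mEq _ _ _))).add
          ((castM_mEq _ _ _).smul s)
    _ = c • Jmat (2 * a * 1) (2 * b * 2) := by
        rw [Matrix.one_mul, Matrix.one_mul, hBP, ← kron_smul_left, ← kron_smul_right,
          add_right_comm, ← kron_add_left, ← kron_add_right, hAB,
          kron_kron_Kmat_add_kron_kron_one]
    _ ≃ₘ _ := .smul _ (Jmat_mEq_Jmat (mul_one _) rfl)

theorem kron_Kmat_mul_add_smul_eq_smul_Jmat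
    (hCB : C * B + s • P = c • Jmat b b) (hPP : P * P = c • Jmat b b) :
    kron (Kmat 2) C * castM (mul_one (2 * a)) rfl (kron (kron (Kmat 2) B) (Jmat 1 2)) +
      kron (Kmat 2) P * castM (mul_one (2 * b)) rfl (kron (kron 1 P) (Jmat 1 2)) +
      s • castM (mul_one (2 * b)) rfl (kron (kron 1 P) (Jmat 1 2)) =
      c • Jmat (2 * b) (2 * b * 2) := by
  refine MEq.eq ?_
  calc _ ≃ₘ kron (kron (Kmat 2 * Kmat 2) (C * B)) (Jmat 1 2) +
          kron (kron (Kmat 2 * 1) (P * P)) (Jmat 1 2) + s • kron (kron 1 P) (Jmat 1 2) :=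
        ((kron_mul_mEq_kron_kron_Jmat _ _ _ _ (castM_mEq _ _ _)).add
          (kron_mul_mEq_kron_kron_Jmat _ _ _ _ (castM_mEq _ _ _))).add
          ((castM_mEq _ _ _).smul s)
    _ = c • Jmat (2 * b * 1) (2 * b * 2) := by
        rw [Kmat_mul_Kmat, Matrix.mul_one, hPP, ← kron_smul_left, ← kron_smul_right,
          add_right_comm, ← kron_add_left, ← kron_add_right, hCB]
        exact (add_comm _ _).trans (kron_kron_Kmat_add_kron_kron_one _)
    _ ≃ₘ _ := .smul _ (Jmat_mEq_Jmat (mul_one _) rfl)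

end BlockRows

section BlockSum

variable (t n : ℕ)

def blockSumMat : Matrix (Fin (t * 4 ^ n)) (Fin (2 ^ n * t)) ℤ :=
  castM (by rw [four_pow_eq]; ring) (one_mul _)
    (kron (Jmat (2 ^ n) 1) (1 : Matrix (Fin (2 ^ n * t)) (Fin (2 ^ n * t)) ℤ))

def revBlockMat : Matrix (Fin (2 ^ n * t)) (Fin (t * 4 ^ n)) ℤ :=
  castM rfl (by rw [four_pow_eq]; ring) (kron (Kmat (2 ^ n)) (Jmat t (2 ^ n * t)))

theorem Pmat_mEq :
    Pmat t n ≃ₘ kron (Jmat (2 ^ n) 1) (kron (Kmat (2 ^ n)) (Jmat t (2 ^ n * t))) :=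
  (castM_mEq _ _ _).trans <| (kron_assoc _ _ _).trans <|
    (MEq.refl _).kron <| (MEq.refl _).kron <| Jmat_mEq_Jmat rfl (mul_comm _ _)

theorem Pmat_eq_blockSumMat_mul_revBlockMat : Pmat t n = blockSumMat t n * revBlockMat t n := by
  refine MEq.eq ?_
  calc Pmat t n ≃ₘ kron (Jmat (2 ^ n) 1) (kron (Kmat (2 ^ n)) (Jmat t (2 ^ n * t))) :=
        Pmat_mEq t n
    _ = kron (Jmat (2 ^ n) 1 * Jmat 1 1) ((1 : Matrix (Fin (2 ^ n * t)) (Fin (2 ^ n * t)) ℤ) *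
          kron (Kmat (2 ^ n)) (Jmat t (2 ^ n * t))) := by
        rw [Jmat_mul_Jmat, Matrix.one_mul, Nat.cast_one, one_smul]
    _ = kron (Jmat (2 ^ n) 1) 1 * kron (Jmat 1 1) (kron (Kmat (2 ^ n)) (Jmat t (2 ^ n * t))) :=
        (kron_mul _ _ _ _).symm
    _ ≃ₘ blockSumMat t n * revBlockMat t n :=
        (mEq_castM _ _ _).mul ((Jmat_one_one_kron _).trans (mEq_castM _ _ _))

theorem revBlockMat_mul_blockSumMat :
    revBlockMat t n * blockSumMat t n = Jmat (2 ^ n * t) (2 ^ n * t) := by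
  refine MEq.eq ?_
  calc revBlockMat t n * blockSumMat t n
      ≃ₘ kron (Kmat (2 ^ n)) (Jmat t (2 ^ n * t)) * kron (Jmat (2 ^ n) 1) 1 :=
        (castM_mEq _ _ _).mul (castM_mEq _ _ _)
    _ = Jmat (2 ^ n * t) (1 * (2 ^ n * t)) := by
        rw [kron_mul, Kmat_mul_Jmat, Matrix.mul_one, Jmat_kron_Jmat]
    _ ≃ₘ Jmat (2 ^ n * t) (2 ^ n * t) := Jmat_mEq_Jmat rfl (one_mul _)

theorem Jmat_mul_revBlockMat (a : ℕ) :
    Jmat a (2 ^ n * t) * revBlockMat t n = (t : ℤ) • Jmat a (t * 4 ^ n) := by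
  refine MEq.eq ?_
  calc Jmat a (2 ^ n * t) * revBlockMat t n
      ≃ₘ kron (Jmat a (2 ^ n)) (Jmat 1 t) * kron (Kmat (2 ^ n)) (Jmat t (2 ^ n * t)) :=
        (Jmat_mEq_Jmat (mul_one a).symm rfl).trans
          (.of_eq Jmat_kron_Jmat.symm) |>.mul (castM_mEq _ _ _)
    _ = (t : ℤ) • Jmat (a * 1) (2 ^ n * (2 ^ n * t)) := by
        rw [kron_mul, Jmat_mul_Kmat, Jmat_mul_Jmat, kron_smul_right, Jmat_kron_Jmat]
    _ ≃ₘ (t : ℤ) • Jmat a (t * 4 ^ n) :=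
        .smul _ (Jmat_mEq_Jmat (mul_one a) (by rw [four_pow_eq]; ring))

theorem blockSumMat_mul_Jmat (b : ℕ) :
    blockSumMat t n * Jmat (2 ^ n * t) b = Jmat (t * 4 ^ n) b := by
  refine MEq.eq ?_
  calc blockSumMat t n * Jmat (2 ^ n * t) b
      ≃ₘ kron (Jmat (2 ^ n) 1) 1 * kron (Jmat 1 1) (Jmat (2 ^ n * t) b) :=
        (castM_mEq _ _ _).mul (Jmat_one_one_kron _).symm
    _ = Jmat (2 ^ n * (2 ^ n * t)) (1 * b) := by
        rw [kron_mul, Jmat_mul_Jmat, Matrix.one_mul, Nat.cast_one, one_smul, Jmat_kron_Jmat]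
    _ ≃ₘ Jmat (t * 4 ^ n) b := Jmat_mEq_Jmat (by rw [four_pow_eq]; ring) (one_mul b)

theorem Pmat_mul_Pmat : Pmat t n * Pmat t n = (t : ℤ) • Jmat (t * 4 ^ n) (t * 4 ^ n) := by
  rw [Pmat_eq_blockSumMat_mul_revBlockMat, Matrix.mul_assoc,
    ← Matrix.mul_assoc (revBlockMat t n), revBlockMat_mul_blockSumMat, Jmat_mul_revBlockMat,
    Matrix.mul_smul, blockSumMat_mul_Jmat]

theorem Pmat_mul_blockSumMat : Pmat t n * blockSumMat t n = Jmat (t * 4 ^ n) (2 ^ n * t) := by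
  rw [Pmat_eq_blockSumMat_mul_revBlockMat, Matrix.mul_assoc, revBlockMat_mul_blockSumMat,
    blockSumMat_mul_Jmat]

theorem mul_Pmat_of_mul_blockSumMat {a : ℕ} {X : Matrix (Fin a) (Fin (t * 4 ^ n)) ℤ}
    (hX : X * blockSumMat t n = Jmat a (2 ^ n * t)) :
    X * Pmat t n = (t : ℤ) • Jmat a (t * 4 ^ n) := by
  rw [Pmat_eq_blockSumMat_mul_revBlockMat, ← Matrix.mul_assoc, hX, Jmat_mul_revBlockMat]

theorem alphaM_Pmat : alphaM (2 ^ n) (Pmat t n) ≃ₘ kron (Kmat (2 ^ n)) (Jmat t (2 ^ n * t)) :=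
  ((Pmat_mEq t n).alphaM _).trans (alphaM_Jmat_kron (by positivity) _)

end BlockSum

theorem Pmat_succ_succ_mEq (t m : ℕ) :
    Pmat t (m + 2) ≃ₘ kron (kron (kron (Jmat (2 ^ (m + 2)) 1) (Kmat 2))
      (alphaM (2 ^ (m + 1)) (Pmat t (m + 1)))) (Jmat 1 2) := by
  have hK : Kmat (2 ^ (m + 2)) ≃ₘ kron (Kmat 2) (Kmat (2 ^ (m + 1))) :=
    (Kmat_mEq_Kmat (pow_succ' 2 (m + 1))).trans Kmat_mul_mEq_kron_Kmat
  have hJ : Jmat t (2 ^ (m + 2) * t) ≃ₘ kron (Jmat t (2 ^ (m + 1) * t)) (Jmat 1 2) :=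
    (Jmat_mEq_Jmat (mul_one t).symm (by ring)).trans (.of_eq Jmat_kron_Jmat.symm)
  calc Pmat t (m + 2)
      ≃ₘ kron (Jmat (2 ^ (m + 2)) 1) (kron (Kmat (2 ^ (m + 2))) (Jmat t (2 ^ (m + 2) * t))) :=
        Pmat_mEq t (m + 2)
    _ ≃ₘ kron (Jmat (2 ^ (m + 2)) 1) (kron (kron (Kmat 2) (Kmat (2 ^ (m + 1))))
          (kron (Jmat t (2 ^ (m + 1) * t)) (Jmat 1 2))) := (MEq.refl _).kron (hK.kron hJ)
    _ ≃ₘ kron (Jmat (2 ^ (m + 2)) 1) (kron (kron (Kmat 2)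
          (kron (Kmat (2 ^ (m + 1))) (Jmat t (2 ^ (m + 1) * t)))) (Jmat 1 2)) :=
        (MEq.refl _).kron (kron_kron_kron_mEq _ _ _ _)
    _ ≃ₘ kron (kron (kron (Jmat (2 ^ (m + 2)) 1) (Kmat 2))
          (kron (Kmat (2 ^ (m + 1))) (Jmat t (2 ^ (m + 1) * t)))) (Jmat 1 2) :=
        (kron_assoc _ _ _).symm.trans ((kron_assoc _ _ _).symm.kron (MEq.refl _))
    _ ≃ₘ _ := (MEq.refl _).kron (alphaM_Pmat t (m + 1)).symm |>.kron (MEq.refl _)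

theorem Pone_mEq_Pmat (t : ℕ) : Pone t ≃ₘ Pmat t 1 :=
  calc Pone t ≃ₘ kron (kron (Jmat 2 1) (Kmat 2)) (Jmat t (2 * t)) := castM_mEq _ _ _
    _ ≃ₘ kron (kron (Jmat (2 ^ 1) 1) (Kmat (2 ^ 1))) (Jmat t (t * 2 ^ 1)) :=
      ((Jmat_mEq_Jmat (by norm_num) rfl).kron (Kmat_mEq_Kmat (by norm_num))).kron
        (Jmat_mEq_Jmat rfl (by ring))
    _ ≃ₘ Pmat t 1 := mEq_castM _ _ _

theorem blockSumMat_succ_succ_mEq (t m : ℕ) :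
    blockSumMat t (m + 2) ≃ₘ
      kron (kron (Jmat 2 1) (blockSumMat t (m + 1))) (1 : Matrix (Fin 2) (Fin 2) ℤ) :=
  calc blockSumMat t (m + 2)
      ≃ₘ kron (Jmat (2 ^ (m + 2)) 1)
          (1 : Matrix (Fin (2 ^ (m + 2) * t)) (Fin (2 ^ (m + 2) * t)) ℤ) := castM_mEq _ _ _
    _ ≃ₘ kron (kron (Jmat 2 1) (Jmat (2 ^ (m + 1)) 1))
          (kron (1 : Matrix (Fin (2 ^ (m + 1) * t)) (Fin (2 ^ (m + 1) * t)) ℤ)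
            (1 : Matrix (Fin 2) (Fin 2) ℤ)) :=
        ((Jmat_mEq_Jmat (m' := 2 * 2 ^ (m + 1)) (n' := 1 * 1) (by ring) rfl).trans
          (.of_eq Jmat_kron_Jmat.symm)).kron
          ((one_mEq_one (m := 2 ^ (m + 2) * t) (m' := 2 ^ (m + 1) * t * 2) (by ring)).trans
            (.of_eq one_kron_one.symm))
    _ ≃ₘ kron (kron (Jmat 2 1) (kron (Jmat (2 ^ (m + 1)) 1)
          (1 : Matrix (Fin (2 ^ (m + 1) * t)) (Fin (2 ^ (m + 1) * t)) ℤ))) 1 :=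
        kron_kron_kron_mEq _ _ _ _
    _ ≃ₘ _ := ((MEq.refl _).kron (mEq_castM _ _ _)).kron (MEq.refl _)

section Recursion

variable {t v : ℕ} (A₁ : Matrix (Fin v) (Fin v) ℤ) (B₁ : Matrix (Fin v) (Fin (4 * t)) ℤ)
  (C₁ : Matrix (Fin (4 * t)) (Fin v) ℤ) (s : ℤ)

theorem Amat_one_mEq : Amat t v A₁ B₁ C₁ 1 ≃ₘ A₁ := castM_mEq _ _ _

theorem Bmat_one_mEq : Bmat t v B₁ 1 ≃ₘ B₁ := castM_mEq _ _ _

theorem Cmat_one_mEq : Cmat t v C₁ 1 ≃ₘ C₁ := castM_mEq _ _ _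

theorem Amat_succ_succ_mEq (m : ℕ) :
    Amat t v A₁ B₁ C₁ (m + 2) ≃ₘ
      block2 (kron (1 : Matrix (Fin 2) (Fin 2) ℤ) (Amat t v A₁ B₁ C₁ (m + 1)))
        (kron (1 : Matrix (Fin 2) (Fin 2) ℤ) (Bmat t v B₁ (m + 1)))
        (kron (Kmat 2) (Cmat t v C₁ (m + 1))) (kron (Kmat 2) (Pmat t (m + 1))) :=
  castM_mEq _ _ _

theorem Bmat_succ_succ_mEq (m : ℕ) :
    Bmat t v B₁ (m + 2) ≃ₘ
      vstack (castM (mul_one _) rfl (kron (kron (Kmat 2) (Bmat t v B₁ (m + 1))) (Jmat 1 2)))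
        (castM (mul_one _) rfl
          (kron (kron (1 : Matrix (Fin 2) (Fin 2) ℤ) (Pmat t (m + 1))) (Jmat 1 2))) :=
  (castM_mEq _ _ _).trans ((mEq_castM _ _ _).vstack (mEq_castM _ _ _))

theorem Cmat_succ_succ_mEq (m : ℕ) :
    Cmat t v C₁ (m + 2) ≃ₘ
      hstack (kron (kron (Jmat (2 ^ (m + 2)) 1) (1 : Matrix (Fin 2) (Fin 2) ℤ))
          (alphaM (2 ^ (m + 1)) (Cmat t v C₁ (m + 1))))
        (kron (kron (Jmat (2 ^ (m + 2)) 1) (1 : Matrix (Fin 2) (Fin 2) ℤ))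
          (alphaM (2 ^ (m + 1)) (Pmat t (m + 1)))) :=
  castM_mEq _ _ _

theorem Bmat_one_mul_blockSumMat
    (hblockB : ∀ i : Fin v, ∃ b : Fin 2, ∀ j : Fin (4 * t),
      B₁ i j = if (j : ℕ) / (2 * t) = (b : ℕ) then 1 else 0) :
    Bmat t v B₁ 1 * blockSumMat t 1 = Jmat (vnum v t 1) (2 ^ 1 * t) := by
  -- every row of `B₁` is a row of `E = I₂ ⊗ J_{1,2t}`, and `E (J_{2,1} ⊗ I_{2t}) = J`
  set E : Matrix (Fin (2 ^ 1 * 1)) (Fin (t * 4 ^ 1)) ℤ := castM rfl (by ring)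
    (kron (1 : Matrix (Fin (2 ^ 1)) (Fin (2 ^ 1)) ℤ) (Jmat 1 (2 ^ 1 * t))) with hE
  have hED : E * blockSumMat t 1 = Jmat (2 ^ 1 * 1) (2 ^ 1 * t) := by
    refine MEq.eq ?_
    calc E * blockSumMat t 1
        ≃ₘ kron (1 : Matrix (Fin (2 ^ 1)) (Fin (2 ^ 1)) ℤ) (Jmat 1 (2 ^ 1 * t)) *
            kron (Jmat (2 ^ 1) 1) (1 : Matrix (Fin (2 ^ 1 * t)) (Fin (2 ^ 1 * t)) ℤ) :=
          (castM_mEq _ _ _).mul (castM_mEq _ _ _)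
      _ = Jmat (2 ^ 1 * 1) (1 * (2 ^ 1 * t)) := by
          rw [kron_mul, Matrix.one_mul, Matrix.mul_one, Jmat_kron_Jmat]
      _ ≃ₘ Jmat (2 ^ 1 * 1) (2 ^ 1 * t) := Jmat_mEq_Jmat rfl (one_mul _)
  ext i r
  obtain ⟨b, hb⟩ := hblockB (Fin.cast (vnum_one v t) i)
  have hrow : ∀ j, Bmat t v B₁ 1 i j = E (Fin.cast (by norm_num) b) j := by
    intro j
    simp [Bmat, castM, hb, hE, kron_apply, one_apply, Fin.ext_iff, eq_comm, Jmat]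
  simp only [mul_apply, hrow]
  exact congrFun (congrFun hED _) r

theorem Bmat_succ_succ_mul_blockSumMat (m : ℕ)
    (ih : Bmat t v B₁ (m + 1) * blockSumMat t (m + 1) =
      Jmat (vnum v t (m + 1)) (2 ^ (m + 1) * t)) :
    Bmat t v B₁ (m + 2) * blockSumMat t (m + 2) = Jmat (vnum v t (m + 2)) (2 ^ (m + 2) * t) := by
  refine MEq.eq ?_
  calc Bmat t v B₁ (m + 2) * blockSumMat t (m + 2)
      ≃ₘ vstack (kron (kron (Kmat 2) (Bmat t v B₁ (m + 1))) (Jmat 1 2))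
            (kron (kron (1 : Matrix (Fin 2) (Fin 2) ℤ) (Pmat t (m + 1))) (Jmat 1 2)) *
          kron (kron (Jmat 2 1) (blockSumMat t (m + 1))) (1 : Matrix (Fin 2) (Fin 2) ℤ) :=
        (castM_mEq _ _ _).mul (blockSumMat_succ_succ_mEq t m)
    _ = Jmat (2 * vnum v t (m + 1) * 1 + 2 * (t * 4 ^ (m + 1)) * 1)
          (1 * (2 ^ (m + 1) * t) * 2) := by
        rw [vstack_mul, kron_mul, kron_mul, kron_mul, kron_mul, Kmat_mul_Jmat, Matrix.one_mul,
          Matrix.mul_one, ih, Pmat_mul_blockSumMat, Jmat_kron_Jmat, Jmat_kron_Jmat,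
          Jmat_kron_Jmat, Jmat_kron_Jmat, vstack_Jmat]
    _ ≃ₘ Jmat (vnum v t (m + 2)) (2 ^ (m + 2) * t) :=
        Jmat_mEq_Jmat (by rw [vnum_succ]; ring) (by ring)

theorem Bmat_mul_blockSumMat
    (hblockB : ∀ i : Fin v, ∃ b : Fin 2, ∀ j : Fin (4 * t),
      B₁ i j = if (j : ℕ) / (2 * t) = (b : ℕ) then 1 else 0) (n : ℕ) (hn : 1 ≤ n) :
    Bmat t v B₁ n * blockSumMat t n = Jmat (vnum v t n) (2 ^ n * t) := by
  obtain ⟨m, rfl⟩ : ∃ m, n = m + 1 := ⟨n - 1, by omega⟩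
  induction m with
  | zero => exact Bmat_one_mul_blockSumMat B₁ hblockB
  | succ m ih => exact Bmat_succ_succ_mul_blockSumMat B₁ m (ih (by omega))

theorem Cmat_succ_succ_mul_Bmat_add_smul_Pmat (m : ℕ)
    (ih : Cmat t v C₁ (m + 1) * Bmat t v B₁ (m + 1) + s • Pmat t (m + 1) =
      (t : ℤ) • Jmat (t * 4 ^ (m + 1)) (t * 4 ^ (m + 1))) :
    Cmat t v C₁ (m + 2) * Bmat t v B₁ (m + 2) + s • Pmat t (m + 2) =
      (t : ℤ) • Jmat (t * 4 ^ (m + 2)) (t * 4 ^ (m + 2)) := by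
  set N := 2 ^ (m + 1)
  set J := Jmat (2 ^ (m + 2)) 1
  set B' := Bmat t v B₁ (m + 1)
  set C' := Cmat t v C₁ (m + 1)
  set P' := Pmat t (m + 1)
  have hCB : Cmat t v C₁ (m + 2) * Bmat t v B₁ (m + 2) ≃ₘ
      kron (kron (kron J (1 * Kmat 2)) (alphaM N (C' * B'))) (Jmat 1 2) +
        kron (kron (kron J (1 * 1)) (alphaM N (P' * P'))) (Jmat 1 2) := by
    refine ((Cmat_succ_succ_mEq C₁ m).mul (Bmat_succ_succ_mEq B₁ m)).trans ?_
    rw [hstack_mul_vstack]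
    exact (kron_kron_alphaM_mul_mEq _ _ _ _ (castM_mEq _ _ _)).add
      (kron_kron_alphaM_mul_mEq _ _ _ _ (castM_mEq _ _ _))
  refine MEq.eq ?_
  calc Cmat t v C₁ (m + 2) * Bmat t v B₁ (m + 2) + s • Pmat t (m + 2)
      ≃ₘ kron (kron (kron J (1 * Kmat 2)) (alphaM N (C' * B'))) (Jmat 1 2) +
          kron (kron (kron J (1 * 1)) (alphaM N (P' * P'))) (Jmat 1 2) +
          s • kron (kron (kron J (Kmat 2)) (alphaM N P')) (Jmat 1 2) :=
        hCB.add ((Pmat_succ_succ_mEq t m).smul s)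
    _ = (t : ℤ) • Jmat (2 ^ (m + 2) * 2 * (t * 4 ^ (m + 1) / N) * 1)
          (1 * 2 * (t * 4 ^ (m + 1)) * 2) := by
        rw [Matrix.one_mul, Matrix.mul_one, Pmat_mul_Pmat, ← kron_smul_left, ← kron_smul_right,
          ← alphaM_smul, add_right_comm, ← kron_add_left, ← kron_add_right, ← alphaM_add, ih,
          ← kron_add_left, ← kron_add_left, ← kron_add_right, Kmat_two_add_one, alphaM_smul,
          alphaM_Jmat, kron_smul_right, kron_smul_left, Jmat_kron_Jmat, Jmat_kron_Jmat,
          Jmat_kron_Jmat]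
    _ ≃ₘ (t : ℤ) • Jmat (t * 4 ^ (m + 2)) (t * 4 ^ (m + 2)) :=
        .smul _ (Jmat_mEq_Jmat (by rw [t_four_pow_div, four_pow_eq]; ring) (by ring))

theorem Cmat_mul_Bmat_add_smul_Pmat
    (hC1B1 : C₁ * B₁ + s • Pone t = (t : ℤ) • Jmat (4 * t) (4 * t)) (n : ℕ) (hn : 1 ≤ n) :
    Cmat t v C₁ n * Bmat t v B₁ n + s • Pmat t n = (t : ℤ) • Jmat (t * 4 ^ n) (t * 4 ^ n) := by
  obtain ⟨m, rfl⟩ : ∃ m, n = m + 1 := ⟨n - 1, by omega⟩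
  induction m with
  | zero =>
    refine MEq.eq ?_
    calc Cmat t v C₁ 1 * Bmat t v B₁ 1 + s • Pmat t 1 ≃ₘ C₁ * B₁ + s • Pone t :=
          ((Cmat_one_mEq C₁).mul (Bmat_one_mEq B₁)).add ((Pone_mEq_Pmat t).symm.smul s)
      _ = (t : ℤ) • Jmat (4 * t) (4 * t) := hC1B1
      _ ≃ₘ (t : ℤ) • Jmat (t * 4 ^ 1) (t * 4 ^ 1) := .smul _ (Jmat_mEq_Jmat (by ring) (by ring))
  | succ m ih => exact Cmat_succ_succ_mul_Bmat_add_smul_Pmat B₁ C₁ s m (ih (by omega))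

theorem Amat_succ_succ_mul_Bmat_add_smul_Bmat (m : ℕ)
    (ihAB : Amat t v A₁ B₁ C₁ (m + 1) * Bmat t v B₁ (m + 1) + s • Bmat t v B₁ (m + 1) =
      (t : ℤ) • Jmat (vnum v t (m + 1)) (t * 4 ^ (m + 1)))
    (hBP : Bmat t v B₁ (m + 1) * Pmat t (m + 1) =
      (t : ℤ) • Jmat (vnum v t (m + 1)) (t * 4 ^ (m + 1)))
    (hCB : Cmat t v C₁ (m + 1) * Bmat t v B₁ (m + 1) + s • Pmat t (m + 1) =
      (t : ℤ) • Jmat (t * 4 ^ (m + 1)) (t * 4 ^ (m + 1))) :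
    Amat t v A₁ B₁ C₁ (m + 2) * Bmat t v B₁ (m + 2) + s • Bmat t v B₁ (m + 2) =
      (t : ℤ) • Jmat (vnum v t (m + 2)) (t * 4 ^ (m + 2)) := by
  refine MEq.eq <| MEq.trans (((Amat_succ_succ_mEq A₁ B₁ C₁ m).mul
    (Bmat_succ_succ_mEq B₁ m)).add ((Bmat_succ_succ_mEq B₁ m).smul s)) ?_
  rw [block2_mul_vstack, smul_vstack, vstack_add,
    kron_one_mul_add_smul_eq_smul_Jmat _ _ _ _ _ ihAB hBP,
    kron_Kmat_mul_add_smul_eq_smul_Jmat _ _ _ _ _ hCB (Pmat_mul_Pmat t (m + 1)),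
    ← smul_vstack, vstack_Jmat]
  exact .smul _ (Jmat_mEq_Jmat (vnum_succ v t m).symm (by ring))

end Recursion

theorem Amat_mul_Bmat_general
    (t v : ℕ) (s : ℤ)
    (A₁ : Matrix (Fin v) (Fin v) ℤ)
    (B₁ : Matrix (Fin v) (Fin (4 * t)) ℤ) (C₁ : Matrix (Fin (4 * t)) (Fin v) ℤ)
    (hA1B1 : A₁ * B₁ + s • B₁ = (t : ℤ) • Jmat v (4 * t))
    (hC1B1 : C₁ * B₁ + s • Pone t = (t : ℤ) • Jmat (4 * t) (4 * t))
    (hblockB : ∀ i : Fin v, ∃! b : Fin 2, ∀ j : Fin (4 * t),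
      B₁ i j = if (j : ℕ) / (2 * t) = (b : ℕ) then 1 else 0)
    (n : ℕ) (hn : 1 ≤ n) :
    Amat t v A₁ B₁ C₁ n * Bmat t v B₁ n + s • Bmat t v B₁ n =
      (t : ℤ) • Jmat (vnum v t n) (t * 4 ^ n) := by
  obtain ⟨m, rfl⟩ : ∃ m, n = m + 1 := ⟨n - 1, by omega⟩
  induction m with
  | zero =>
    refine MEq.eq ?_
    calc Amat t v A₁ B₁ C₁ 1 * Bmat t v B₁ 1 + s • Bmat t v B₁ 1 ≃ₘ A₁ * B₁ + s • B₁ :=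
          ((Amat_one_mEq A₁ B₁ C₁).mul (Bmat_one_mEq B₁)).add ((Bmat_one_mEq B₁).smul s)
      _ = (t : ℤ) • Jmat v (4 * t) := hA1B1
      _ ≃ₘ (t : ℤ) • Jmat (vnum v t 1) (t * 4 ^ 1) :=
          .smul _ (Jmat_mEq_Jmat (vnum_one v t).symm (by ring))
  | succ m ih =>
    have hBP := mul_Pmat_of_mul_blockSumMat t (m + 1)
      (Bmat_mul_blockSumMat B₁ (fun i => (hblockB i).exists) (m + 1) (by omega))
    exact Amat_succ_succ_mul_Bmat_add_smul_Bmat A₁ B₁ C₁ s m (ih (by omega)) hBP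
      (Cmat_mul_Bmat_add_smul_Pmat B₁ C₁ s hC1B1 (m + 1) (by omega))

/-- Equation (15): `A_n · B_n + s·B_n = t · J_{v_n, t·4^n}`. -/
theorem Amat_mul_Bmat
    (t lam v k : ℕ) (ht : 0 < t) (hv : 0 < v) (hk : 0 < k)
    (s : ℤ) (hs : s = (t : ℤ) - (lam : ℤ)) (hspos : 0 < s)
    (A₁ : Matrix (Fin v) (Fin v) ℤ)
    (B₁ : Matrix (Fin v) (Fin (4 * t)) ℤ) (C₁ : Matrix (Fin (4 * t)) (Fin v) ℤ)
    (hA01 : ∀ i j, A₁ i j = 0 ∨ A₁ i j = 1)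
    (hB01 : ∀ i j, B₁ i j = 0 ∨ B₁ i j = 1) (hC01 : ∀ i j, C₁ i j = 0 ∨ C₁ i j = 1)
    (hA1 : A₁ * A₁ + s • A₁ = (t : ℤ) • Jmat v v)
    (hA1J : A₁ * Jmat v v = (k : ℤ) • Jmat v v)
    (hJA1 : Jmat v v * A₁ = (k : ℤ) • Jmat v v)
    (hB1C1 : B₁ * C₁ = (t : ℤ) • Jmat v v)
    (hB1P1 : B₁ * Pone t = (t : ℤ) • Jmat v (4 * t))
    (hP1C1 : Pone t * C₁ = (t : ℤ) • Jmat (4 * t) v)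
    (hA1B1 : A₁ * B₁ + s • B₁ = (t : ℤ) • Jmat v (4 * t))
    (hC1A1 : C₁ * A₁ + s • C₁ = (t : ℤ) • Jmat (4 * t) v)
    (hC1B1 : C₁ * B₁ + s • Pone t = (t : ℤ) • Jmat (4 * t) (4 * t))
    (hBJ : B₁ * Jmat (4 * t) (4 * t) = (2 * (t : ℤ)) • Jmat v (4 * t))
    (hJB : Jmat v v * B₁ = (k : ℤ) • Jmat v (4 * t))
    (hCJ : C₁ * Jmat v v = (k : ℤ) • Jmat (4 * t) v)
    (hJC : Jmat (4 * t) (4 * t) * C₁ = (2 * (t : ℤ)) • Jmat (4 * t) v)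
    (hblockB : ∀ i : Fin v, ∃! b : Fin 2, ∀ j : Fin (4 * t),
      B₁ i j = if (j : ℕ) / (2 * t) = (b : ℕ) then 1 else 0)
    (hblockC : ∀ j : Fin v, ∀ b : Fin 2,
      (Finset.univ.filter fun i : Fin (4 * t) =>
        (i : ℕ) / (2 * t) = (b : ℕ) ∧ C₁ i j = 1).card = t)
    (n : ℕ) (hn : 1 ≤ n) :
    Amat t v A₁ B₁ C₁ n * Bmat t v B₁ n + s • Bmat t v B₁ n =
      (t : ℤ) • Jmat (vnum v t n) (t * 4 ^ n) :=
  Amat_mul_Bmat_general t v s A₁ B₁ C₁ hA1B1 hC1B1 hblockB n hn
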